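/- arXiv:0909.0578 — 4 statements merged into one kernel-verified Lean document; each statement's English description precedes it below -/
import Mathlib

section
/- Let Γ be a finite subgroup of SL₂(ℂ), let ρ : Γ → GL(ℂ²) be the natural (inclusion) representation, and let χᵢ be an irreducible complex character of Γ. Then the formal power series Σₙ mᵢ(n)·tⁿ ∈ ℂ⟦t⟧, where mᵢ(n) is the multiplicity of χᵢ in the n-th symmetric power Symⁿ(ρ), is a rational function: there exist polynomials N, D ∈ ℂ[t] with D(0) ≠ 0 such that D(t)·Σₙ mᵢ(n)tⁿ = N(t) in ℂ⟦t⟧. -/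
open Matrix Complex PowerSeries CategoryTheory

/-- The `k`-th column image polynomial used to define the symmetric power:
the image of the basis vector `e₁^k e₂^(n-k)` of `Symⁿ(ℂ²)` under the endomorphism
induced by `g`, written as a polynomial in `X 0 ↔ e₁`, `X 1 ↔ e₂`. -/
noncomputable def symPoly2 (n : ℕ) (g : Matrix (Fin 2) (Fin 2) ℂ) (k : Fin (n + 1)) :
    MvPolynomial (Fin 2) ℂ :=
  (MvPolynomial.C (g 0 0) * MvPolynomial.X 0 + MvPolynomial.C (g 1 0) * MvPolynomial.X 1) ^ (k : ℕ) *
  (MvPolynomial.C (g 0 1) * MvPolynomial.X 0 + MvPolynomial.C (g 1 1) * MvPolynomial.X 1) ^ (n - (k : ℕ))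

/-- The matrix of the endomorphism `Symⁿ(g)` induced by `g` on the `n`-th symmetric power
of `ℂ²`, in the basis of monomials `e₁^i e₂^(n-i)`, `i = 0, …, n`. -/
noncomputable def symMatrix2 (n : ℕ) (g : Matrix (Fin 2) (Fin 2) ℂ) :
    Matrix (Fin (n + 1)) (Fin (n + 1)) ℂ :=
  Matrix.of fun i k =>
    MvPolynomial.coeff (Finsupp.single 0 (i : ℕ) + Finsupp.single 1 (n - (i : ℕ)))
      (symPoly2 n g k)

/-- The multiplicity of the character `χ` in the `n`-th symmetric power of the natural
representation of `Γ ⊆ SL₂(ℂ)`: the inner product `(1/|Γ|)·Σ_{g∈Γ} χ_{Symⁿ}(g)·conj(χ(g))`. -/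
noncomputable def symMult2 (Γ : Subgroup (SpecialLinearGroup (Fin 2) ℂ)) [Fintype Γ]
    (χ : Γ → ℂ) (n : ℕ) : ℂ :=
  (Fintype.card Γ : ℂ)⁻¹ * ∑ g : Γ, (symMatrix2 n g.1.1).trace * (starRingEnd ℂ) (χ g)

/-!
If `g` has eigenvalues `λ, μ`, then `tr Symⁿ g = Σ_{i+j=n} λⁱ μʲ`, so
`Σₙ tr (Symⁿ g) tⁿ = 1 / det (1 - t g)`, and the multiplicity series
`|Γ|⁻¹ Σ_g conj χ(g) / det (1 - t g)` is a finite combination of rational series.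

Eigenvalues are avoided as follows. Setting the second variable to `1` turns
`tr Symⁿ !![a, b; c, d]` into `tₙ = Σᵢ [Xⁱ] (aX + c)ⁱ (bX + d)ⁿ⁻ⁱ`. Together with the companion
sum `wₙ = Σᵢ [Xⁱ] (aX + c)ⁱ⁺¹ (bX + d)ⁿ⁻ⁱ` it satisfies the coupled recurrence
`tₙ₊₂ = aⁿ⁺² + d tₙ₊₁ + b wₙ`, `wₙ₊₁ = c tₙ₊₁ + a wₙ`; eliminating `w` gives
`tₙ₊₂ = (a + d) tₙ₊₁ - (ad - bc) tₙ`, i.e. `det (1 - t g) · Σₙ tₙ tⁿ = 1`.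
-/

lemma Finsupp.eq_single_add_single_iff {v : Fin 2 →₀ ℕ} {n i : ℕ} (hv : v.degree = n) :
    v = single 0 i + single 1 (n - i) ↔ v 0 = i := by
  rw [degree_eq_sum, Fin.sum_univ_two] at hv
  constructor
  · rintro rfl
    simp
  · intro h
    ext x
    fin_cases x <;> simp <;> omega

namespace MvPolynomial

variable {R : Type*} [CommSemiring R]

lemma aeval_X_one_monomial (v : Fin 2 →₀ ℕ) (r : R) :
    aeval ![Polynomial.X, 1] (monomial v r) = Polynomial.C r * Polynomial.X ^ v 0 := by
  simp [aeval_monomial, Finsupp.prod_fintype, Polynomial.algebraMap_eq]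

lemma IsHomogeneous.coeff_eq_coeff_aeval {p : MvPolynomial (Fin 2) R} {n : ℕ}
    (hp : p.IsHomogeneous n) (i : ℕ) :
    p.coeff (Finsupp.single 0 i + Finsupp.single 1 (n - i)) =
      (MvPolynomial.aeval ![Polynomial.X, 1] p).coeff i := by
  conv_lhs => rw [p.as_sum]
  conv_rhs => rw [p.as_sum]
  simp only [coeff_sum, map_sum, Polynomial.finsetSum_coeff, aeval_X_one_monomial,
    Polynomial.coeff_C_mul_X_pow, coeff_monomial]
  refine Finset.sum_congr rfl fun v hv => ?_
  have hdeg : v.degree = n := by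
    rw [Finsupp.degree_eq_weight_one]
    exact hp (mem_support_iff.mp hv)
  exact if_congr ((Finsupp.eq_single_add_single_iff hdeg).trans eq_comm) rfl rfl

end MvPolynomial

namespace Polynomial

variable {R : Type*} [CommSemiring R]

lemma coeff_C_mul_X_add_C_pow_self (a c : R) (k : ℕ) : ((C a * X + C c) ^ k).coeff k = a ^ k := by
  have := coeff_pow_of_natDegree_le (m := k) (p := C a * X + C c) (by compute_degree : _ ≤ 1)
  simpa [coeff_C] using this

lemma sum_range_succ_coeff_mul_C_mul_X_add_C (b d : R) (Q : ℕ → R[X]) (n : ℕ) :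
    ∑ i ∈ Finset.range (n + 1), (Q i * (C b * X + C d)).coeff i =
      b * ∑ i ∈ Finset.range n, (Q (i + 1)).coeff i +
        d * ∑ i ∈ Finset.range (n + 1), (Q i).coeff i := by
  simp only [mul_add, ← mul_assoc, coeff_add, coeff_mul_C, Finset.sum_add_distrib,
    Finset.sum_mul, mul_comm b, mul_comm d]
  rw [Finset.sum_range_succ']
  simp

end Polynomial

section SymTrace

variable {R : Type*} [CommRing R] (a b c d : R)

noncomputable def symTrace (n : ℕ) : R :=
  ∑ i ∈ Finset.range (n + 1),
    ((Polynomial.C a * Polynomial.X + Polynomial.C c) ^ i *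
      (Polynomial.C b * Polynomial.X + Polynomial.C d) ^ (n - i)).coeff i

noncomputable def symTraceAux (n : ℕ) : R :=
  ∑ i ∈ Finset.range (n + 1),
    ((Polynomial.C a * Polynomial.X + Polynomial.C c) ^ (i + 1) *
      (Polynomial.C b * Polynomial.X + Polynomial.C d) ^ (n - i)).coeff i

lemma symTrace_zero : symTrace a b c d 0 = 1 := by simp [symTrace]

lemma symTrace_one : symTrace a b c d 1 = a + d := by
  simp [symTrace, Finset.sum_range_succ, add_comm]

lemma symTraceAux_zero : symTraceAux a b c d 0 = c := by simp [symTraceAux]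

lemma symTrace_add_two_aux (n : ℕ) :
    symTrace a b c d (n + 2) =
      a ^ (n + 2) + d * symTrace a b c d (n + 1) + b * symTraceAux a b c d n := by
  set A : Polynomial R := Polynomial.C a * Polynomial.X + Polynomial.C c
  set B : Polynomial R := Polynomial.C b * Polynomial.X + Polynomial.C d
  have hsplit : ∀ i ∈ Finset.range (n + 2),
      (A ^ i * B ^ (n + 2 - i)).coeff i = (A ^ i * B ^ (n + 1 - i) * B).coeff i := by
    intro i hi
    rw [mul_assoc, ← pow_succ, show n + 2 - i = n + 1 - i + 1 by grind]
  rw [symTrace, Finset.sum_range_succ, Nat.sub_self, pow_zero, mul_one,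
    Polynomial.coeff_C_mul_X_add_C_pow_self, Finset.sum_congr rfl hsplit,
    Polynomial.sum_range_succ_coeff_mul_C_mul_X_add_C]
  simp only [symTrace, symTraceAux, pow_succ, Nat.add_sub_add_right, A, B]
  ring

lemma symTraceAux_succ (n : ℕ) :
    symTraceAux a b c d (n + 1) = c * symTrace a b c d (n + 1) + a * symTraceAux a b c d n := by
  set A : Polynomial R := Polynomial.C a * Polynomial.X + Polynomial.C c
  set B : Polynomial R := Polynomial.C b * Polynomial.X + Polynomial.C d
  have hsplit : ∀ i ∈ Finset.range (n + 2),
      (A ^ (i + 1) * B ^ (n + 1 - i)).coeff i = (A ^ i * B ^ (n + 1 - i) * A).coeff i := by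
    intro i _
    ring_nf
  rw [symTraceAux, Finset.sum_congr rfl hsplit, Polynomial.sum_range_succ_coeff_mul_C_mul_X_add_C]
  simp only [symTrace, symTraceAux, pow_succ, Nat.add_sub_add_right, A, B]
  ring

lemma symTrace_add_two (n : ℕ) :
    symTrace a b c d (n + 2) =
      (a + d) * symTrace a b c d (n + 1) - (a * d - b * c) * symTrace a b c d n := by
  rcases n with _ | n
  · rw [symTrace_add_two_aux, symTrace_one, symTrace_zero, symTraceAux_zero]
    ring
  · have hprev := symTrace_add_two_aux a b c d n
    rw [symTrace_add_two_aux, symTraceAux_succ]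
    linear_combination (-a) * hprev

end SymTrace

lemma Matrix.charpolyRev_fin_two {R : Type*} [CommRing R] (M : Matrix (Fin 2) (Fin 2) R) :
    M.charpolyRev = 1 - Polynomial.C (M 0 0 + M 1 1) * Polynomial.X +
      Polynomial.C (M 0 0 * M 1 1 - M 0 1 * M 1 0) * Polynomial.X ^ 2 := by
  simp [charpolyRev, det_fin_two]
  ring

lemma aeval_charpolyRev_mul_mk_symTrace {R : Type*} [CommRing R] (M : Matrix (Fin 2) (Fin 2) R) :
    Polynomial.aeval X M.charpolyRev * mk (symTrace (M 0 0) (M 0 1) (M 1 0) (M 1 1)) = 1 := by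
  ext (_ | _ | n) <;>
    simp [Matrix.charpolyRev_fin_two, sub_mul, add_mul, mul_assoc, pow_two, coeff_succ_X_mul,
      symTrace_zero, symTrace_one, symTrace_add_two, coeff_one]

lemma isHomogeneous_symPoly2 (n : ℕ) (g : Matrix (Fin 2) (Fin 2) ℂ) (k : Fin (n + 1)) :
    (symPoly2 n g k).IsHomogeneous n := by
  have hlin (u v : ℂ) : (MvPolynomial.C u * MvPolynomial.X 0 +
      MvPolynomial.C v * MvPolynomial.X 1 : MvPolynomial (Fin 2) ℂ).IsHomogeneous 1 :=
    (MvPolynomial.isHomogeneous_C_mul_X u 0).add (MvPolynomial.isHomogeneous_C_mul_X v 1)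
  have := ((hlin (g 0 0) (g 1 0)).pow k).mul ((hlin (g 0 1) (g 1 1)).pow (n - k))
  rwa [one_mul, one_mul, Nat.add_sub_cancel' k.is_le] at this

lemma trace_symMatrix2 (n : ℕ) (g : Matrix (Fin 2) (Fin 2) ℂ) :
    (symMatrix2 n g).trace = symTrace (g 0 0) (g 0 1) (g 1 0) (g 1 1) n := by
  rw [Matrix.trace, symTrace, ← Fin.sum_univ_eq_sum_range]
  refine Finset.sum_congr rfl fun i _ => ?_
  rw [Matrix.diag_apply, symMatrix2, Matrix.of_apply,
    (isHomogeneous_symPoly2 n g i).coeff_eq_coeff_aeval]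
  simp [symPoly2, Polynomial.algebraMap_eq]

def rationalPowerSeries (R : Type*) [CommRing R] [IsDomain R] :
    Submodule R (PowerSeries R) where
  carrier := {f | ∃ N D : Polynomial R, D.coeff 0 ≠ 0 ∧
    Polynomial.aeval X D * f = Polynomial.aeval X N}
  zero_mem' := ⟨0, 1, by simp, by simp⟩
  add_mem' := by
    rintro f g ⟨N, D, hD, hf⟩ ⟨N', D', hD', hg⟩
    refine ⟨N * D' + N' * D, D * D', by simp [Polynomial.mul_coeff_zero, hD, hD'], ?_⟩
    simp only [map_mul, map_add, ← hf, ← hg]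
    ring
  smul_mem' := by
    rintro r f ⟨N, D, hD, hf⟩
    exact ⟨r • N, D, hD, by rw [map_smul, ← hf, mul_smul_comm]⟩

lemma mem_rationalPowerSeries_of_mul_eq_one {R : Type*} [CommRing R] [IsDomain R]
    {f : PowerSeries R} {D : Polynomial R} (hD : D.coeff 0 ≠ 0)
    (hf : Polynomial.aeval X D * f = 1) : f ∈ rationalPowerSeries R :=
  ⟨1, D, hD, by simpa using hf⟩

lemma mk_trace_symMatrix2_mem_rationalPowerSeries (g : Matrix (Fin 2) (Fin 2) ℂ) :
    mk (fun n => (symMatrix2 n g).trace) ∈ rationalPowerSeries ℂ := by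
  simp_rw [trace_symMatrix2]
  exact mem_rationalPowerSeries_of_mul_eq_one (by simp [Polynomial.coeff_zero_eq_eval_zero])
    (aeval_charpolyRev_mul_mk_symTrace g)

lemma mk_symMult2 (Γ : Subgroup (SpecialLinearGroup (Fin 2) ℂ)) [Fintype Γ] (χ : Γ → ℂ) :
    mk (symMult2 Γ χ) =
      (Fintype.card Γ : ℂ)⁻¹ •
        ∑ g : Γ, starRingEnd ℂ (χ g) • mk fun n => (symMatrix2 n g.1.1).trace := by
  ext n
  simp [symMult2, mul_comm]

lemma mk_symMult2_mem_rationalPowerSeries (Γ : Subgroup (SpecialLinearGroup (Fin 2) ℂ))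
    [Fintype Γ] (χ : Γ → ℂ) : mk (symMult2 Γ χ) ∈ rationalPowerSeries ℂ := by
  rw [mk_symMult2]
  exact Submodule.smul_mem _ _ <| Submodule.sum_mem _ fun g _ =>
    Submodule.smul_mem _ _ (mk_trace_symMatrix2_mem_rationalPowerSeries g.1.1)

theorem sl2_multiplicity_series_rational_general
    (Γ : Subgroup (SpecialLinearGroup (Fin 2) ℂ)) [Fintype Γ]
    (V : FDRep ℂ Γ) :
    ∃ N D : Polynomial ℂ, D.coeff 0 ≠ 0 ∧
      Polynomial.aeval (PowerSeries.X : PowerSeries ℂ) D *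
          PowerSeries.mk (fun n => symMult2 Γ V.character n) =
        Polynomial.aeval (PowerSeries.X : PowerSeries ℂ) N :=
  mk_symMult2_mem_rationalPowerSeries Γ V.character

/-- For a finite subgroup `Γ` of `SL₂(ℂ)` and an irreducible complex character `χᵢ` of `Γ`,
the formal power series `Σₙ mᵢ(n)·tⁿ`, where `mᵢ(n)` is the multiplicity of `χᵢ` in the `n`-th
symmetric power of the natural representation, is a rational function: there are polynomials
`N, D ∈ ℂ[t]` with `D(0) ≠ 0` and `D(t)·Σₙ mᵢ(n)·tⁿ = N(t)` in `ℂ⟦t⟧`. -/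
theorem sl2_multiplicity_series_rational
    (Γ : Subgroup (SpecialLinearGroup (Fin 2) ℂ)) [Fintype Γ]
    (V : FDRep ℂ Γ) (hV : Simple V) :
    ∃ N D : Polynomial ℂ, D.coeff 0 ≠ 0 ∧
      Polynomial.aeval (PowerSeries.X : PowerSeries ℂ) D *
          PowerSeries.mk (fun n => symMult2 Γ V.character n) =
        Polynomial.aeval (PowerSeries.X : PowerSeries ℂ) N :=
  sl2_multiplicity_series_rational_general Γ V
end

section
/- Let j ≥ 1, ζ = exp(2πi/j), and let Γ ⊂ SL₂(ℂ) be the cyclic group {diag(ζᵏ, ζ⁻ᵏ) : k = 0, …, j−1}, identified with ℤ/jℤ. For i ∈ {0, …, j−1} let mᵢ(n) be the multiplicity of the character k ↦ ζ^{ik} of ℤ/jℤ in the n-th symmetric power Symⁿ of the natural inclusion representation of Γ on ℂ². Then in ℂ⟦t⟧ one has Σₙ mᵢ(n)·tⁿ = (1/j)·Σ_{p=0}^{j−1} ζ^{ip}·((1 − tζᵖ)(1 − tζ⁻ᵖ))⁻¹, where the inverse is taken in ℂ⟦t⟧. -/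
open Matrix Complex PowerSeries CategoryTheory

/-!
The `n`-th coefficient of `((1 - aX)(1 - bX))⁻¹`, a product of two geometric series, is
`hₙ(a, b) = Σ_{p+q=n} aᵖ b^q`, which is also the trace of `Symⁿ(diag(a, b))`. Since `ζ` lies on
the unit circle, `conj (ζ^{ik}) = ζ^{-ik}`, so the left side is `(1/j) Σ_k ζ^{-ik} hₙ(ζᵏ, ζ⁻ᵏ)`;
the substitution `k ↦ -k` in `ℤ/jℤ` together with the symmetry of `hₙ` turns it into the right side.
-/

open Finset

lemma symMatrix2_diagonal_trace (a b : ℂ) (n : ℕ) :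
    (symMatrix2 n (diagonal ![a, b])).trace = ∑ x ∈ antidiagonal n, a ^ x.1 * b ^ x.2 := by
  rw [Nat.sum_antidiagonal_eq_sum_range_succ_mk, Matrix.trace,
    sum_range fun m => a ^ m * b ^ (n - m)]
  refine sum_congr rfl fun m _ => ?_
  simp only [Matrix.diag, symMatrix2, symPoly2, of_apply, diagonal_apply_eq, diagonal_apply_ne _
    (show (1 : Fin 2) ≠ 0 by decide), diagonal_apply_ne _ (show (0 : Fin 2) ≠ 1 by decide),
    Matrix.cons_val_zero, Matrix.cons_val_one, map_zero, zero_mul, add_zero, zero_add]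
  rw [mul_pow, mul_pow, ← MvPolynomial.C_pow, ← MvPolynomial.C_pow,
    MvPolynomial.X_pow_eq_monomial, MvPolynomial.X_pow_eq_monomial,
    mul_mul_mul_comm, ← _root_.map_mul, MvPolynomial.monomial_mul, one_mul,
    MvPolynomial.coeff_C_mul, MvPolynomial.coeff_monomial, if_pos rfl, mul_one]

lemma sum_antidiagonal_pow_mul_pow_comm {R : Type*} [CommSemiring R] (a b : R) (n : ℕ) :
    ∑ x ∈ antidiagonal n, a ^ x.1 * b ^ x.2 = ∑ x ∈ antidiagonal n, b ^ x.1 * a ^ x.2 := by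
  rw [← Nat.sum_antidiagonal_swap]
  simp only [Prod.fst_swap, Prod.snd_swap, mul_comm]

namespace PowerSeries

variable {k : Type*} [Field k]

lemma inv_one_sub_C_mul_X (a : k) : (1 - C a * X)⁻¹ = mk (a ^ ·) := by
  rw [PowerSeries.inv_eq_iff_mul_eq_one (by simp)]
  ext (_ | n)
  · simp
  · simp [mul_sub, ← mul_assoc, mul_comm (mk _) (C a), coeff_succ_mul_X, pow_succ']

lemma coeff_inv_one_sub_C_mul_X_mul_one_sub_C_mul_X (a b : k) (n : ℕ) :
    coeff n ((1 - C a * X) * (1 - C b * X))⁻¹ = ∑ x ∈ antidiagonal n, a ^ x.1 * b ^ x.2 := by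
  rw [PowerSeries.mul_inv_rev, mul_comm, coeff_mul]
  simp only [inv_one_sub_C_mul_X, coeff_mk]

end PowerSeries

lemma sum_range_inv_pow_eq_sum_range_pow {G M : Type*} [DivisionMonoid G] [AddCommMonoid M]
    {ζ : G} {j : ℕ} (hζ : ζ ^ j = 1) (f : G → M) :
    ∑ k ∈ range j, f (ζ⁻¹ ^ k) = ∑ k ∈ range j, f (ζ ^ k) := by
  obtain _ | j := j
  · simp
  have hreflect : ∀ k ∈ range (j + 1), ζ⁻¹ ^ (j + 1 - 1 - k) = ζ ^ (k + 1) := fun k hk => by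
    rw [mem_range] at hk
    rw [inv_pow]
    exact inv_eq_of_mul_eq_one_right (by rw [← pow_add, ← hζ]; congr 1; omega)
  rw [← sum_range_reflect, sum_congr rfl fun k hk => congrArg f (hreflect k hk),
    sum_range_succ, sum_range_succ', hζ, pow_zero]

theorem sl2_typeA_multiplicity_series_general (j : ℕ) (hj : 1 ≤ j) (i : ℕ)
    (ζ : ℂ) (hζ : ζ = Complex.exp (2 * (Real.pi : ℂ) * Complex.I / (j : ℂ))) :
    PowerSeries.mk (fun n => (j : ℂ)⁻¹ *
        ∑ k ∈ Finset.range j,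
          (symMatrix2 n (Matrix.diagonal ![ζ ^ k, ζ⁻¹ ^ k])).trace *
            (starRingEnd ℂ) (ζ ^ (i * k))) =
      (j : ℂ)⁻¹ •
        ∑ p ∈ Finset.range j,
          PowerSeries.C (ζ ^ (i * p)) *
            ((1 - PowerSeries.C (ζ ^ p) * PowerSeries.X) *
              (1 - PowerSeries.C (ζ⁻¹ ^ p) * PowerSeries.X))⁻¹ := by
  have hprim : IsPrimitiveRoot ζ j := hζ ▸ Complex.isPrimitiveRoot_exp j (by omega)
  have hconj : starRingEnd ℂ ζ = ζ⁻¹ := (inv_eq_conj (hprim.norm'_eq_one (by omega))).symm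
  ext n
  simp only [coeff_mk, map_smul, map_sum, coeff_C_mul, smul_eq_mul, symMatrix2_diagonal_trace,
    coeff_inv_one_sub_C_mul_X_mul_one_sub_C_mul_X]
  congr 1
  let f : ℂ → ℂ := fun w => w ^ i * ∑ x ∈ antidiagonal n, w ^ x.1 * w⁻¹ ^ x.2
  calc _ = ∑ k ∈ range j, f (ζ⁻¹ ^ k) := sum_congr rfl fun k _ => by
          rw [map_pow, hconj, mul_comm i, pow_mul, mul_comm, sum_antidiagonal_pow_mul_pow_comm]
          simp only [f, inv_pow, inv_inv]
    _ = ∑ k ∈ range j, f (ζ ^ k) := sum_range_inv_pow_eq_sum_range_pow hprim.pow_eq_one f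
    _ = _ := sum_congr rfl fun k _ => by simp only [f, mul_comm i, pow_mul, inv_pow]

/-- Type `A` (cyclic) subgroups of `SL₂(ℂ)`: for `Γ = {diag(ζᵏ, ζ⁻ᵏ) : 0 ≤ k < j} ≅ ℤ/jℤ`
with `ζ = exp(2πi/j)`, and `0 ≤ i < j`, the generating series of the multiplicities
`mᵢ(n)` of the character `k ↦ ζ^{ik}` in `Symⁿ` of the natural representation satisfies
`Σₙ mᵢ(n)·tⁿ = (1/j)·Σ_{p<j} ζ^{ip}·((1 − tζᵖ)(1 − tζ⁻ᵖ))⁻¹` in `ℂ⟦t⟧`. -/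
theorem sl2_typeA_multiplicity_series (j : ℕ) (hj : 1 ≤ j) (i : ℕ) (hi : i < j)
    (ζ : ℂ) (hζ : ζ = Complex.exp (2 * (Real.pi : ℂ) * Complex.I / (j : ℂ))) :
    PowerSeries.mk (fun n => (j : ℂ)⁻¹ *
        ∑ k ∈ Finset.range j,
          (symMatrix2 n (Matrix.diagonal ![ζ ^ k, ζ⁻¹ ^ k])).trace *
            (starRingEnd ℂ) (ζ ^ (i * k))) =
      (j : ℂ)⁻¹ •
        ∑ p ∈ Finset.range j,
          PowerSeries.C (ζ ^ (i * p)) *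
            ((1 - PowerSeries.C (ζ ^ p) * PowerSeries.X) *
              (1 - PowerSeries.C (ζ⁻¹ ^ p) * PowerSeries.X))⁻¹ :=
  sl2_typeA_multiplicity_series_general j hj i ζ hζ
end

section
/- Let l ≥ 0, let A⁽¹⁾, A⁽²⁾ ∈ M_{l+1}(ℂ) be commuting matrices, and let (v_{m,n})_{m,n∈ℤ} be vectors in ℂ^{l+1} with v_{m,n} = 0 whenever m < 0 or n < 0, satisfying for all m, n ≥ 0 the recurrences A⁽¹⁾·v_{m,n} = v_{m+1,n} + v_{m,n−1} + v_{m−1,n+1} and A⁽²⁾·v_{m,n} = v_{m,n+1} + v_{m−1,n} + v_{m+1,n−1}. Let P(t,u) := Σ_{m,n≥0} v_{m,n}·tᵐuⁿ, a vector of formal power series in ℂ⟦t,u⟧^{l+1}. Then (1 − t·A⁽¹⁾ + t²·A⁽²⁾ − t³)·(1 − u·A⁽²⁾ + u²·A⁽¹⁾ − u³)·P(t,u) = (1 − tu)·v_{0,0}, where the matrix-valued power series act coordinatewise on P(t,u). -/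
/-!
Compare coefficients of `tᵐ uⁿ`, with `v` extended by zero to negative indices. The `u`-factor
acts on each column `n ↦ v m n` as the difference operator
`v m n - A⁽²⁾ v m (n-1) + A⁽¹⁾ v m (n-2) - v m (n-3)`, and the `A⁽²⁾`-recurrence at `(m, n-1)`
minus the `A⁽¹⁾`-recurrence at `(m, n-2)` makes this vanish for `n ≥ 2`; what survives is
`v m 0` in row `0` and `-v (m-1) 0` in row `1`, i.e. the `u`-factor sends `P(t,u)` to
`(1 - tu) P(t,0)`. The recurrences are invariant under `(m, n, A⁽¹⁾, A⁽²⁾) ↦ (n, m, A⁽²⁾, A⁽¹⁾)`,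
so the same computation in column `0` shows that the `t`-factor sends `P(t,0)` to `v 0 0`.
-/

open Matrix

section

variable {ι R : Type*} [Ring R] [Fintype ι]

/-- The coefficient of `x ^ k` in `(1 - x A + x² B - x³) • ∑ₖ v k x ^ k`. -/
def cubicDiff (A B : Matrix ι ι R) (v : ℤ → ι → R) (k : ℤ) : ι → R :=
  v k - A *ᵥ v (k - 1) + B *ᵥ v (k - 2) - v (k - 3)

/-- The Pieri rule for tensoring the `SL₃`-irreducible of highest weight `(m, n)` with the standard
representation and with its dual. -/
structure PieriRecurrence (A₁ A₂ : Matrix ι ι R) (v : ℤ → ℤ → ι → R) : Prop where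
  eq_zero_of_neg : ∀ m n, m < 0 ∨ n < 0 → v m n = 0
  mulVec_fst : ∀ m n, 0 ≤ m → 0 ≤ n → A₁ *ᵥ v m n = v (m + 1) n + v m (n - 1) + v (m - 1) (n + 1)
  mulVec_snd : ∀ m n, 0 ≤ m → 0 ≤ n → A₂ *ᵥ v m n = v m (n + 1) + v (m - 1) n + v (m + 1) (n - 1)

namespace PieriRecurrence

variable {A₁ A₂ : Matrix ι ι R} {v : ℤ → ℤ → ι → R}

theorem of_natCast (hneg : ∀ m n, m < 0 ∨ n < 0 → v m n = 0)
    (hrec₁ : ∀ m n : ℕ, A₁ *ᵥ v m n = v (m + 1) n + v m (n - 1) + v (m - 1) (n + 1))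
    (hrec₂ : ∀ m n : ℕ, A₂ *ᵥ v m n = v m (n + 1) + v (m - 1) n + v (m + 1) (n - 1)) :
    PieriRecurrence A₁ A₂ v where
  eq_zero_of_neg := hneg
  mulVec_fst m n hm hn := by
    lift m to ℕ using hm
    lift n to ℕ using hn
    exact hrec₁ m n
  mulVec_snd m n hm hn := by
    lift m to ℕ using hm
    lift n to ℕ using hn
    exact hrec₂ m n

theorem swap (h : PieriRecurrence A₁ A₂ v) : PieriRecurrence A₂ A₁ fun m n => v n m where
  eq_zero_of_neg m n hmn := h.eq_zero_of_neg n m hmn.symm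
  mulVec_fst m n hm hn := h.mulVec_snd n m hn hm
  mulVec_snd m n hm hn := h.mulVec_fst n m hn hm

theorem cubicDiff_column (h : PieriRecurrence A₁ A₂ v) (m n : ℤ) :
    cubicDiff A₂ A₁ (v m) n =
      (if n = 0 then v m 0 else 0) - (if n = 1 then v (m - 1) 0 else 0) := by
  have hv := h.eq_zero_of_neg
  unfold cubicDiff
  rcases lt_or_ge m 0 with hm | hm
  · simp (disch := omega) [hv]
  obtain hn | rfl | rfl | hn : n < 0 ∨ n = 0 ∨ n = 1 ∨ 2 ≤ n := by omega
  · simp (disch := omega) [hv]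
  · simp (disch := omega) [hv]
  · have h₂ := h.mulVec_snd m 0 hm le_rfl
    simp (disch := omega) only [hv, zero_add, add_zero] at h₂
    simp (disch := omega) [hv, h₂]
  · have h₂ := h.mulVec_snd m (n - 1) hm (by omega)
    have h₁ := h.mulVec_fst m (n - 2) hm (by omega)
    rw [if_neg (show n ≠ 0 by omega), if_neg (show n ≠ 1 by omega)]
    ring_nf at h₁ h₂ ⊢
    linear_combination (norm := module) -h₂ + h₁

theorem cubicDiff_row_zero (h : PieriRecurrence A₁ A₂ v) (m : ℤ) :
    cubicDiff A₁ A₂ (fun k => v k 0) m = if m = 0 then v 0 0 else 0 := by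
  simpa [h.eq_zero_of_neg 0 (-1) (.inr (by norm_num))] using h.swap.cubicDiff_column 0 m

theorem cubicDiff_cubicDiff (h : PieriRecurrence A₁ A₂ v) (m n : ℤ) :
    cubicDiff A₁ A₂ (fun k => cubicDiff A₂ A₁ (v k) n) m =
      (if m = 0 ∧ n = 0 then v 0 0 else 0) - (if m = 1 ∧ n = 1 then v 0 0 else 0) := by
  simp only [h.cubicDiff_column]
  rcases eq_or_ne n 0 with rfl | hn₀
  · simpa using h.cubicDiff_row_zero m
  rcases eq_or_ne n 1 with rfl | hn₁
  · have h₀ := h.cubicDiff_row_zero (m - 1)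
    simp only [cubicDiff, sub_eq_zero] at h₀
    simp only [cubicDiff, one_ne_zero, ↓reduceIte, zero_sub, mulVec_neg, sub_neg_eq_add,
      and_false, and_true]
    ring_nf at h₀ ⊢
    linear_combination (norm := module) -h₀
  · simp [cubicDiff, hn₀, hn₁]

end PieriRecurrence

end

theorem Matrix.cubic_mulVec {ι S : Type*} [CommRing S] [Fintype ι] [DecidableEq ι] (x : S)
    (M N : Matrix ι ι S) (w : ι → S) :
    (1 - x • M + x ^ 2 • N - x ^ 3 • (1 : Matrix ι ι S)) *ᵥ w =
      w - x • (M *ᵥ w) + x ^ 2 • (N *ᵥ w) - x ^ 3 • w := by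
  simp only [sub_mulVec, add_mulVec, smul_mulVec, one_mulVec]

namespace Finsupp

theorem eq_single_zero_add_single_one (d : Fin 2 →₀ ℕ) : d = single 0 (d 0) + single 1 (d 1) := by
  ext a
  fin_cases a <;> simp

theorem single_zero_add_single_one_le_iff {j k m n : ℕ} :
    single (0 : Fin 2) j + single 1 k ≤ single 0 m + single 1 n ↔ j ≤ m ∧ k ≤ n := by
  simp [le_def, Fin.forall_fin_two]

theorem single_zero_add_single_one_tsub (j k m n : ℕ) :
    single (0 : Fin 2) m + single 1 n - (single 0 j + single 1 k) =
      single 0 (m - j) + single 1 (n - k) := by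
  ext a
  fin_cases a <;> simp

end Finsupp

namespace MvPowerSeries

variable {R : Type*} [CommRing R]

/-- The coefficient of `X 0 ^ m * X 1 ^ n`, taken to be `0` when `m < 0` or `n < 0`. -/
noncomputable def bicoeff (m n : ℤ) : MvPowerSeries (Fin 2) R →ₗ[R] R :=
  if 0 ≤ m ∧ 0 ≤ n then coeff (Finsupp.single 0 m.toNat + Finsupp.single 1 n.toNat) else 0

@[simp]
theorem bicoeff_natCast (m n : ℕ) (f : MvPowerSeries (Fin 2) R) :
    bicoeff m n f = coeff (Finsupp.single 0 m + Finsupp.single 1 n) f := by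
  simp [bicoeff]

theorem bicoeff_of_neg {m n : ℤ} (h : m < 0 ∨ n < 0) (f : MvPowerSeries (Fin 2) R) :
    bicoeff m n f = 0 := by
  rw [bicoeff, if_neg (by omega), LinearMap.zero_apply]

theorem ext_bicoeff {f g : MvPowerSeries (Fin 2) R}
    (h : ∀ m n : ℕ, bicoeff m n f = bicoeff m n g) : f = g := by
  ext d
  rw [d.eq_single_zero_add_single_one]
  simpa using h (d 0) (d 1)

theorem bicoeff_monomial_mul (m n : ℤ) (j k : ℕ) (a : R) (f : MvPowerSeries (Fin 2) R) :
    bicoeff m n (monomial (Finsupp.single 0 j + Finsupp.single 1 k) a * f) =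
      a * bicoeff (m - j) (n - k) f := by
  by_cases hmn : 0 ≤ m ∧ 0 ≤ n
  · lift m to ℕ using hmn.1
    lift n to ℕ using hmn.2
    simp only [bicoeff_natCast, coeff_monomial_mul, Finsupp.single_zero_add_single_one_le_iff,
      Finsupp.single_zero_add_single_one_tsub]
    split_ifs with hjk
    · rw [← Nat.cast_sub hjk.1, ← Nat.cast_sub hjk.2, bicoeff_natCast]
    · rw [bicoeff_of_neg (by omega), mul_zero]
  · rw [bicoeff_of_neg (by omega), bicoeff_of_neg (by omega), mul_zero]

theorem bicoeff_X_pow_mul_X_pow_mul (m n : ℤ) (j k : ℕ) (f : MvPowerSeries (Fin 2) R) :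
    bicoeff m n (X 0 ^ j * X 1 ^ k * f) = bicoeff (m - j) (n - k) f := by
  rw [X_pow_eq, X_pow_eq, monomial_mul_monomial, one_mul, bicoeff_monomial_mul, one_mul]

theorem bicoeff_C (m n : ℤ) (a : R) : bicoeff m n (C a) = if m = 0 ∧ n = 0 then a else 0 := by
  by_cases hmn : 0 ≤ m ∧ 0 ≤ n
  · lift m to ℕ using hmn.1
    lift n to ℕ using hmn.2
    simp [coeff_C, Finsupp.ext_iff, Fin.forall_fin_two]
  · rw [bicoeff_of_neg (by omega), if_neg (by omega)]

theorem bicoeff_one_sub_X_mul_X_mul_C (m n : ℤ) (a : R) :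
    bicoeff m n ((1 - X 0 * X 1) * C a) =
      (if m = 0 ∧ n = 0 then a else 0) - (if m = 1 ∧ n = 1 then a else 0) := by
  have h := bicoeff_X_pow_mul_X_pow_mul m n 1 1 (C a)
  rw [pow_one, pow_one, Nat.cast_one] at h
  simp only [sub_mul, one_mul, map_sub, h, bicoeff_C, sub_eq_zero]

variable {ι : Type*}

noncomputable def coeffArray (m n : ℤ) : (ι → MvPowerSeries (Fin 2) R) →ₗ[R] ι → R :=
  (bicoeff m n).compLeft ι

theorem coeffArray_apply (m n : ℤ) (w : ι → MvPowerSeries (Fin 2) R) (i : ι) :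
    coeffArray m n w i = bicoeff m n (w i) := rfl

theorem coeffArray_injective {w w' : ι → MvPowerSeries (Fin 2) R}
    (h : ∀ m n : ℤ, coeffArray m n w = coeffArray m n w') : w = w' :=
  funext fun i => ext_bicoeff fun m n => congrFun (h m n) i

theorem coeffArray_eq_of_coeff {w : ι → MvPowerSeries (Fin 2) R} {v : ℤ → ℤ → ι → R}
    (hneg : ∀ m n, m < 0 ∨ n < 0 → v m n = 0)
    (hw : ∀ i (m n : ℕ), coeff (Finsupp.single 0 m + Finsupp.single 1 n) (w i) = v m n i)
    (m n : ℤ) : coeffArray m n w = v m n := by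
  ext i
  by_cases hmn : 0 ≤ m ∧ 0 ≤ n
  · lift m to ℕ using hmn.1
    lift n to ℕ using hmn.2
    rw [coeffArray_apply, bicoeff_natCast, hw]
  · rw [coeffArray_apply, bicoeff_of_neg (by omega), hneg m n (by omega), Pi.zero_apply]

theorem coeffArray_X_zero_pow_smul (m n : ℤ) (k : ℕ) (w : ι → MvPowerSeries (Fin 2) R) :
    coeffArray m n ((X 0 : MvPowerSeries (Fin 2) R) ^ k • w) = coeffArray (m - k) n w := by
  ext i
  simpa [coeffArray_apply] using bicoeff_X_pow_mul_X_pow_mul m n k 0 (w i)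

theorem coeffArray_X_one_pow_smul (m n : ℤ) (k : ℕ) (w : ι → MvPowerSeries (Fin 2) R) :
    coeffArray m n ((X 1 : MvPowerSeries (Fin 2) R) ^ k • w) = coeffArray m (n - k) w := by
  ext i
  simpa [coeffArray_apply] using bicoeff_X_pow_mul_X_pow_mul m n 0 k (w i)

theorem coeffArray_map_C_mulVec [Fintype ι] (A : Matrix ι ι R) (w : ι → MvPowerSeries (Fin 2) R)
    (m n : ℤ) : coeffArray m n (A.map C *ᵥ w) = A *ᵥ coeffArray m n w := by
  ext i
  simp [coeffArray_apply, mulVec, dotProduct, ← smul_eq_C_mul]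

variable [Fintype ι] [DecidableEq ι]

theorem coeffArray_cubic_X_zero_mulVec (A B : Matrix ι ι R) (w : ι → MvPowerSeries (Fin 2) R)
    (m n : ℤ) :
    coeffArray m n ((1 - (X 0 : MvPowerSeries (Fin 2) R) • A.map C
        + (X 0 : MvPowerSeries (Fin 2) R) ^ 2 • B.map C
        - (X 0 : MvPowerSeries (Fin 2) R) ^ 3 • 1) *ᵥ w) =
      cubicDiff A B (coeffArray · n w) m := by
  have h₁ (w' : ι → MvPowerSeries (Fin 2) R) :
      coeffArray m n ((X 0 : MvPowerSeries (Fin 2) R) • w') = coeffArray (m - 1) n w' := by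
    simpa using coeffArray_X_zero_pow_smul m n 1 w'
  simp only [Matrix.cubic_mulVec, map_sub, map_add, h₁, coeffArray_X_zero_pow_smul,
    coeffArray_map_C_mulVec, cubicDiff, Nat.cast_ofNat]

theorem coeffArray_cubic_X_one_mulVec (A B : Matrix ι ι R) (w : ι → MvPowerSeries (Fin 2) R)
    (m n : ℤ) :
    coeffArray m n ((1 - (X 1 : MvPowerSeries (Fin 2) R) • A.map C
        + (X 1 : MvPowerSeries (Fin 2) R) ^ 2 • B.map C
        - (X 1 : MvPowerSeries (Fin 2) R) ^ 3 • 1) *ᵥ w) =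
      cubicDiff A B (coeffArray m · w) n := by
  have h₁ (w' : ι → MvPowerSeries (Fin 2) R) :
      coeffArray m n ((X 1 : MvPowerSeries (Fin 2) R) • w') = coeffArray m (n - 1) w' := by
    simpa using coeffArray_X_one_pow_smul m n 1 w'
  simp only [Matrix.cubic_mulVec, map_sub, map_add, h₁, coeffArray_X_one_pow_smul,
    coeffArray_map_C_mulVec, cubicDiff, Nat.cast_ofNat]

end MvPowerSeries

theorem two_variable_multiplicity_series_functional_equation_general
    (l : ℕ) (A₁ A₂ : Matrix (Fin (l + 1)) (Fin (l + 1)) ℂ)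
    (v : ℤ → ℤ → (Fin (l + 1) → ℂ))
    (hneg : ∀ m n : ℤ, m < 0 ∨ n < 0 → v m n = 0)
    (hrec₁ : ∀ m n : ℕ, A₁.mulVec (v m n) =
      v (m + 1) n + v m (n - 1) + v (m - 1) (n + 1))
    (hrec₂ : ∀ m n : ℕ, A₂.mulVec (v m n) =
      v m (n + 1) + v (m - 1) n + v (m + 1) (n - 1))
    (P : Fin (l + 1) → MvPowerSeries (Fin 2) ℂ)
    (hP : ∀ (i : Fin (l + 1)) (m n : ℕ),
      MvPowerSeries.coeff (R := ℂ) (Finsupp.single 0 m + Finsupp.single 1 n) (P i) = v m n i) :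
    ((1 - (MvPowerSeries.X (0 : Fin 2) : MvPowerSeries (Fin 2) ℂ) • A₁.map ⇑(MvPowerSeries.C (σ := Fin 2) (R := ℂ))
        + (MvPowerSeries.X (0 : Fin 2) : MvPowerSeries (Fin 2) ℂ) ^ 2 • A₂.map ⇑(MvPowerSeries.C (σ := Fin 2) (R := ℂ))
        - (MvPowerSeries.X (0 : Fin 2) : MvPowerSeries (Fin 2) ℂ) ^ 3 • (1 : Matrix (Fin (l + 1)) (Fin (l + 1))
            (MvPowerSeries (Fin 2) ℂ))) *
      (1 - (MvPowerSeries.X (1 : Fin 2) : MvPowerSeries (Fin 2) ℂ) • A₂.map ⇑(MvPowerSeries.C (σ := Fin 2) (R := ℂ))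
        + (MvPowerSeries.X (1 : Fin 2) : MvPowerSeries (Fin 2) ℂ) ^ 2 • A₁.map ⇑(MvPowerSeries.C (σ := Fin 2) (R := ℂ))
        - (MvPowerSeries.X (1 : Fin 2) : MvPowerSeries (Fin 2) ℂ) ^ 3 • (1 : Matrix (Fin (l + 1)) (Fin (l + 1))
            (MvPowerSeries (Fin 2) ℂ)))).mulVec P =
      fun i => (1 - (MvPowerSeries.X (0 : Fin 2) : MvPowerSeries (Fin 2) ℂ) * MvPowerSeries.X (1 : Fin 2)) *
        MvPowerSeries.C (σ := Fin 2) (R := ℂ) (v 0 0 i) := by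
  have hv : PieriRecurrence A₁ A₂ v := .of_natCast hneg hrec₁ hrec₂
  refine MvPowerSeries.coeffArray_injective fun m n => ?_
  rw [← mulVec_mulVec, MvPowerSeries.coeffArray_cubic_X_zero_mulVec]
  simp only [MvPowerSeries.coeffArray_cubic_X_one_mulVec,
    MvPowerSeries.coeffArray_eq_of_coeff hneg hP, hv.cubicDiff_cubicDiff]
  ext i
  simp [MvPowerSeries.coeffArray_apply, MvPowerSeries.bicoeff_one_sub_X_mul_X_mul_C, ite_apply]

/-- Let `A⁽¹⁾, A⁽²⁾` be commuting `(l+1) × (l+1)` complex matrices and `(v_{m,n})` vectors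
in `ℂ^{l+1}` (zero for negative indices) satisfying the recurrences
`A⁽¹⁾ v_{m,n} = v_{m+1,n} + v_{m,n−1} + v_{m−1,n+1}` and
`A⁽²⁾ v_{m,n} = v_{m,n+1} + v_{m−1,n} + v_{m+1,n−1}`.  Then the vector of power series
`P(t,u) = Σ v_{m,n} tᵐ uⁿ` satisfies
`(1 − t A⁽¹⁾ + t² A⁽²⁾ − t³)(1 − u A⁽²⁾ + u² A⁽¹⁾ − u³) P(t,u) = (1 − tu) v_{0,0}`. -/
theorem two_variable_multiplicity_series_functional_equation
    (l : ℕ) (A₁ A₂ : Matrix (Fin (l + 1)) (Fin (l + 1)) ℂ)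
    (hcomm : A₁ * A₂ = A₂ * A₁)
    (v : ℤ → ℤ → (Fin (l + 1) → ℂ))
    (hneg : ∀ m n : ℤ, m < 0 ∨ n < 0 → v m n = 0)
    (hrec₁ : ∀ m n : ℕ, A₁.mulVec (v m n) =
      v (m + 1) n + v m (n - 1) + v (m - 1) (n + 1))
    (hrec₂ : ∀ m n : ℕ, A₂.mulVec (v m n) =
      v m (n + 1) + v (m - 1) n + v (m + 1) (n - 1))
    (P : Fin (l + 1) → MvPowerSeries (Fin 2) ℂ)
    (hP : ∀ (i : Fin (l + 1)) (m n : ℕ),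
      MvPowerSeries.coeff (R := ℂ) (Finsupp.single 0 m + Finsupp.single 1 n) (P i) = v m n i) :
    ((1 - (MvPowerSeries.X (0 : Fin 2) : MvPowerSeries (Fin 2) ℂ) • A₁.map ⇑(MvPowerSeries.C (σ := Fin 2) (R := ℂ))
        + (MvPowerSeries.X (0 : Fin 2) : MvPowerSeries (Fin 2) ℂ) ^ 2 • A₂.map ⇑(MvPowerSeries.C (σ := Fin 2) (R := ℂ))
        - (MvPowerSeries.X (0 : Fin 2) : MvPowerSeries (Fin 2) ℂ) ^ 3 • (1 : Matrix (Fin (l + 1)) (Fin (l + 1))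
            (MvPowerSeries (Fin 2) ℂ))) *
      (1 - (MvPowerSeries.X (1 : Fin 2) : MvPowerSeries (Fin 2) ℂ) • A₂.map ⇑(MvPowerSeries.C (σ := Fin 2) (R := ℂ))
        + (MvPowerSeries.X (1 : Fin 2) : MvPowerSeries (Fin 2) ℂ) ^ 2 • A₁.map ⇑(MvPowerSeries.C (σ := Fin 2) (R := ℂ))
        - (MvPowerSeries.X (1 : Fin 2) : MvPowerSeries (Fin 2) ℂ) ^ 3 • (1 : Matrix (Fin (l + 1)) (Fin (l + 1))
            (MvPowerSeries (Fin 2) ℂ)))).mulVec P =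
      fun i => (1 - (MvPowerSeries.X (0 : Fin 2) : MvPowerSeries (Fin 2) ℂ) * MvPowerSeries.X (1 : Fin 2)) *
        MvPowerSeries.C (σ := Fin 2) (R := ℂ) (v 0 0 i) :=
  two_variable_multiplicity_series_functional_equation_general l A₁ A₂ v hneg hrec₁ hrec₂ P hP
end

section
/- Let l ≥ 0, let A⁽¹⁾, A⁽²⁾ ∈ M_{l+1}(ℂ) be commuting matrices, and let (v_{m,n})_{m,n∈ℤ} be vectors in ℂ^{l+1} with v_{m,n} = 0 whenever m < 0 or n < 0, satisfying for all m, n ≥ 0 the recurrences A⁽¹⁾·v_{m,n} = v_{m+1,n} + v_{m,n−1} + v_{m−1,n+1} and A⁽²⁾·v_{m,n} = v_{m,n+1} + v_{m−1,n} + v_{m+1,n−1}. Then for each coordinate i ∈ {0, …, l}, the formal power series P(t,u)ᵢ := Σ_{m,n≥0} (v_{m,n})ᵢ·tᵐuⁿ ∈ ℂ⟦t,u⟧ is rational: there exist polynomials N, D ∈ ℂ[t,u] with D(0,0) ≠ 0 such that D·P(t,u)ᵢ = N in ℂ⟦t,u⟧. -/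
/-!
With `t = X 0`, `u = X 1`, let `T(t) = 1 - A₁ t + A₂ t² - t³` and `U(u) = 1 - A₂ u + A₁ u² - u³`.
Substituting the two recurrences shows that `U(u) P = (1 - t u) P(t, 0)` and, on the row `n = 0`,
that `T(t) P(t, 0) = v₀₀`. So the polynomial matrix `M = T(t) U(u)` satisfies
`M P = (1 - t u) v₀₀`, and `M(0, 0) = 1`. Cramer's rule `det M • P = adj M (1 - t u) v₀₀` then
writes every coordinate of `P` as a polynomial divided by `det M`, whose constant term is `1`.
-/

open Matrix

theorem RingHom.map_det_smul_eq_of_mulVec_eq {ι S T : Type*} [Fintype ι] [DecidableEq ι]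
    [CommRing S] [CommRing T] (f : S →+* T) {M : Matrix ι ι S} {x : ι → T} {y : ι → S}
    (h : M.map f *ᵥ x = f ∘ y) : f M.det • x = f ∘ (M.adjugate *ᵥ y) := by
  funext i
  rw [Function.comp_apply, RingHom.map_mulVec, f.map_det, ← f.mapMatrix_apply, f.map_adjugate,
    f.mapMatrix_apply, ← h, mulVec_mulVec, adjugate_mul, smul_mulVec, one_mulVec]

theorem MvPolynomial.exists_coe_mul_eq_coe_of_map_mulVec_eq {σ ι R : Type*} [Fintype ι]
    [DecidableEq ι] [CommRing R] {M : Matrix ι ι (MvPolynomial σ R)}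
    (hM : constantCoeff M.det ≠ 0) {P : ι → MvPowerSeries σ R} {q : ι → MvPolynomial σ R}
    (h : M.map coeToMvPowerSeries.ringHom *ᵥ P = coeToMvPowerSeries.ringHom ∘ q) (i : ι) :
    ∃ N D : MvPolynomial σ R, constantCoeff D ≠ 0 ∧ (D : MvPowerSeries σ R) * P i = N :=
  ⟨_, _, hM, congrFun (RingHom.map_det_smul_eq_of_mulVec_eq _ h) i⟩

theorem MvPolynomial.aeval_X_eq_coe {σ R : Type*} [CommSemiring R] (p : MvPolynomial σ R) :
    aeval (fun k => (MvPowerSeries.X k : MvPowerSeries σ R)) p = p := by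
  induction p using MvPolynomial.induction_on with
  | C a => simp [MvPowerSeries.algebraMap_apply]
  | add p q hp hq => simp [hp, hq]
  | mul_X p s hp => simp [hp]

namespace QuadrantSeries

open MvPowerSeries

variable {ι R : Type*} [CommRing R]

def SupportedInQuadrant {M : Type*} [Zero M] (w : ℤ → ℤ → M) : Prop :=
  ∀ m n, m < 0 ∨ n < 0 → w m n = 0

theorem SupportedInQuadrant.apply_of_fst_neg {M : Type*} [Zero M] {w : ℤ → ℤ → M}
    (hw : SupportedInQuadrant w) (m n : ℤ) (hm : m < 0) : w m n = 0 :=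
  hw m n (Or.inl hm)

theorem SupportedInQuadrant.apply_of_snd_neg {M : Type*} [Zero M] {w : ℤ → ℤ → M}
    (hw : SupportedInQuadrant w) (m n : ℤ) (hn : n < 0) : w m n = 0 :=
  hw m n (Or.inr hn)

def boundaryRow {M : Type*} [Zero M] (w : ℤ → ℤ → M) : ℤ → ℤ → M :=
  fun m n => if n = 0 then w m 0 else 0

theorem SupportedInQuadrant.boundaryRow {M : Type*} [Zero M] {w : ℤ → ℤ → M}
    (hw : SupportedInQuadrant w) : SupportedInQuadrant (boundaryRow w) := fun m n h => by
  unfold QuadrantSeries.boundaryRow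
  split_ifs with hn
  · exact hw m 0 (by omega)
  · rfl

theorem SupportedInQuadrant.mulVec [Fintype ι] {v : ℤ → ℤ → ι → R} (hv : SupportedInQuadrant v)
    (B : Matrix ι ι R) : SupportedInQuadrant fun m n => B *ᵥ v m n := fun m n h => by
  simp only [hv m n h, mulVec_zero]

def genSeries : (ℤ → ℤ → ι → R) →ₗ[R] ι → MvPowerSeries (Fin 2) R where
  toFun v i s := v (s 0) (s 1) i
  map_add' _ _ := rfl
  map_smul' _ _ := rfl

theorem coeff_genSeries (v : ℤ → ℤ → ι → R) (i : ι) (s : Fin 2 →₀ ℕ) :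
    coeff s (genSeries v i) = v (s 0) (s 1) i :=
  rfl

theorem monomial_one_smul_genSeries {v : ℤ → ℤ → ι → R} (hv : SupportedInQuadrant v)
    (e : Fin 2 →₀ ℕ) :
    monomial e (1 : R) • genSeries v = genSeries fun m n => v (m - e 0) (n - e 1) := by
  funext i
  ext s
  rw [Pi.smul_apply, smul_eq_mul, coeff_monomial_mul, one_mul, coeff_genSeries, coeff_genSeries]
  split_ifs with hes
  · simp [Nat.cast_sub (hes 0), Nat.cast_sub (hes 1)]
  · obtain ⟨k, hk⟩ := not_forall.mp hes
    have hneg : (s 0 : ℤ) - e 0 < 0 ∨ (s 1 : ℤ) - e 1 < 0 := by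
      fin_cases k <;> simp at hk <;> omega
    simp [hv _ _ hneg]

theorem algebraMap_mulVec_genSeries [Fintype ι] (B : Matrix ι ι R) (v : ℤ → ℤ → ι → R) :
    B.map (algebraMap R (MvPowerSeries (Fin 2) R)) *ᵥ genSeries v =
      genSeries fun m n => B *ᵥ v m n := by
  funext i
  ext s
  simp [mulVec, dotProduct, map_sum, coeff_genSeries, MvPowerSeries.algebraMap_apply, coeff_C_mul]

theorem genSeries_ite_origin (x : ι → R) :
    genSeries (fun m n => if m = 0 ∧ n = 0 then x else 0) = fun i => C (x i) := by
  funext i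
  ext s
  rw [coeff_genSeries, coeff_C]
  have hs : s = 0 ↔ (s 0 : ℤ) = 0 ∧ (s 1 : ℤ) = 0 := by
    simp [Finsupp.ext_iff, Fin.forall_fin_two]
  simp only [hs]
  split_ifs <;> rfl

section Pencil

variable [DecidableEq ι]

/-- For `g ∈ SL₃`, `det (1 - x g) = 1 - χ₁(g) x + χ₂(g) x² - x³` with `χ₁, χ₂` the fundamental
characters; the two recurrences are the Pieri rules for `χ₁` and `χ₂`, and `B₁, B₂` take their
place. -/
def cubicPencil {S : Type*} [CommRing S] [Algebra R S] (x : S) (B₁ B₂ : Matrix ι ι R) :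
    Matrix ι ι S :=
  1 - x • B₁.map (algebraMap R S) + x ^ 2 • B₂.map (algebraMap R S) - x ^ 3 • 1

theorem cubicPencil_zero {S : Type*} [CommRing S] [Algebra R S] (B₁ B₂ : Matrix ι ι R) :
    cubicPencil (0 : S) B₁ B₂ = 1 := by
  simp [cubicPencil]

theorem map_cubicPencil {S S' : Type*} [CommRing S] [Algebra R S] [CommRing S'] [Algebra R S']
    (f : S →+* S') (hf : f.comp (algebraMap R S) = algebraMap R S') (x : S)
    (B₁ B₂ : Matrix ι ι R) :
    (cubicPencil x B₁ B₂).map f = cubicPencil (f x) B₁ B₂ := by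
  ext i j
  simp [cubicPencil, Matrix.one_apply, apply_ite f, ← hf]

theorem cubicPencil_monomial_mulVec_genSeries [Fintype ι]
    {v : ℤ → ℤ → ι → R} (hv : SupportedInQuadrant v) (e : Fin 2 →₀ ℕ) (B₁ B₂ : Matrix ι ι R) :
    cubicPencil (monomial e (1 : R)) B₁ B₂ *ᵥ genSeries v =
      genSeries fun m n => v m n - B₁ *ᵥ v (m - e 0) (n - e 1)
        + B₂ *ᵥ v (m - 2 * e 0) (n - 2 * e 1) - v (m - 3 * e 0) (n - 3 * e 1) := by
  simp only [cubicPencil, sub_mulVec, add_mulVec, smul_mulVec, one_mulVec,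
    algebraMap_mulVec_genSeries, monomial_pow, one_pow, monomial_one_smul_genSeries hv,
    monomial_one_smul_genSeries (hv.mulVec _)]
  simp only [Finsupp.smul_apply, smul_eq_mul, Nat.cast_mul, Nat.cast_ofNat, ← map_sub, ← map_add]
  rfl

theorem constantCoeff_det_cubicPencil_X_mul {σ : Type*} [Fintype ι] (a b : σ)
    (B₁ B₂ B₃ B₄ : Matrix ι ι R) :
    MvPolynomial.constantCoeff
      (cubicPencil (MvPolynomial.X a : MvPolynomial σ R) B₁ B₂ *
        cubicPencil (MvPolynomial.X b) B₃ B₄).det = 1 := by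
  have hconst : MvPolynomial.constantCoeff.comp (algebraMap R (MvPolynomial σ R)) =
      algebraMap R R :=
    MvPolynomial.constantCoeff_comp_algebraMap R σ
  rw [RingHom.map_det, RingHom.mapMatrix_apply, Matrix.map_mul, map_cubicPencil _ hconst,
    map_cubicPencil _ hconst]
  simp only [MvPolynomial.constantCoeff_X, cubicPencil_zero, one_mul, det_one]

end Pencil

variable [Fintype ι]

structure IsPieriSolution (A₁ A₂ : Matrix ι ι R) (v : ℤ → ℤ → ι → R) : Prop where
  supported : SupportedInQuadrant v
  rec₁ : ∀ m n : ℕ, A₁ *ᵥ v m n = v (m + 1) n + v m (n - 1) + v (m - 1) (n + 1)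
  rec₂ : ∀ m n : ℕ, A₂ *ᵥ v m n = v m (n + 1) + v (m - 1) n + v (m + 1) (n - 1)

namespace IsPieriSolution

variable {A₁ A₂ : Matrix ι ι R} {v : ℤ → ℤ → ι → R}

theorem difference_u_eq (hv : IsPieriSolution A₁ A₂ v) (m n : ℤ) :
    v m n - A₂ *ᵥ v m (n - 1) + A₁ *ᵥ v m (n - 2) - v m (n - 3) =
      boundaryRow v m n - boundaryRow v (m - 1) (n - 1) := by
  have hvm := hv.supported.apply_of_fst_neg
  have hvn := hv.supported.apply_of_snd_neg
  rcases lt_or_ge m 0 with hm | hm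
  · simp [boundaryRow, hvm, hm, show m - 1 < 0 by omega]
  rcases lt_or_ge n 0 with hn | hn
  · simp [boundaryRow, hvn, hn, hn.ne, show n - 1 ≠ 0 by omega, show n - 1 < 0 by omega,
      show n - 2 < 0 by omega, show n - 3 < 0 by omega]
  lift m to ℕ using hm
  lift n to ℕ using hn
  rcases n with _ | _ | n
  · simp [boundaryRow, hvn]
  · have h₂ := hv.rec₂ m 0
    simp [boundaryRow, hvn] at h₂ ⊢
    rw [h₂]
    abel
  · have h₁ := hv.rec₁ m n
    have h₂ := hv.rec₂ m (n + 1)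
    push_cast at h₁ h₂ ⊢
    ring_nf at h₁ h₂ ⊢
    rw [h₁, h₂, boundaryRow, boundaryRow, if_neg (by omega), if_neg (by omega)]
    abel

theorem difference_t_boundaryRow_eq (hv : IsPieriSolution A₁ A₂ v) (m n : ℤ) :
    boundaryRow v m n - A₁ *ᵥ boundaryRow v (m - 1) n + A₂ *ᵥ boundaryRow v (m - 2) n
      - boundaryRow v (m - 3) n = if m = 0 ∧ n = 0 then v 0 0 else 0 := by
  have hvm := hv.supported.apply_of_fst_neg
  have hvn := hv.supported.apply_of_snd_neg
  by_cases hn : n = 0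
  swap
  · simp [boundaryRow, hn]
  subst hn
  simp only [boundaryRow, if_true, and_true]
  rcases lt_or_ge m 0 with hm | hm
  · simp [hvm, hm, hm.ne, show m - 1 < 0 by omega, show m - 2 < 0 by omega,
      show m - 3 < 0 by omega]
  lift m to ℕ using hm
  rcases m with _ | _ | m
  · simp [hvm]
  · have h₁ := hv.rec₁ 0 0
    simp [hvm, hvn] at h₁ ⊢
    rw [h₁]
    abel
  · have h₁ := hv.rec₁ (m + 1) 0
    have h₂ := hv.rec₂ m 0
    push_cast at h₁ h₂ ⊢
    ring_nf at h₁ h₂ ⊢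
    rw [h₁, h₂, if_neg (by omega)]
    abel

variable [DecidableEq ι]

theorem cubicPencil_X_one_mulVec_genSeries (hv : IsPieriSolution A₁ A₂ v) :
    cubicPencil (X 1 : MvPowerSeries (Fin 2) R) A₂ A₁ *ᵥ genSeries v =
      (1 - X 0 * X 1 : MvPowerSeries (Fin 2) R) • genSeries (boundaryRow v) := by
  have hX : (X 0 * X 1 : MvPowerSeries (Fin 2) R) =
      monomial (Finsupp.single 0 1 + Finsupp.single 1 1) 1 := by
    rw [X_def, X_def, monomial_mul_monomial, mul_one]
  rw [sub_smul, one_smul, hX, monomial_one_smul_genSeries hv.supported.boundaryRow, ← map_sub,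
    X_def, cubicPencil_monomial_mulVec_genSeries hv.supported]
  congr 1
  funext m n
  simpa using hv.difference_u_eq m n

theorem cubicPencil_X_zero_mulVec_genSeries_boundaryRow (hv : IsPieriSolution A₁ A₂ v) :
    cubicPencil (X 0 : MvPowerSeries (Fin 2) R) A₁ A₂ *ᵥ genSeries (boundaryRow v) =
      fun i => C (v 0 0 i) := by
  rw [X_def, cubicPencil_monomial_mulVec_genSeries hv.supported.boundaryRow,
    ← genSeries_ite_origin]
  congr 1
  funext m n
  simpa using hv.difference_t_boundaryRow_eq m n

theorem map_coe_cubicPencil_mul_mulVec_genSeries (hv : IsPieriSolution A₁ A₂ v) :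
    (cubicPencil (MvPolynomial.X 0 : MvPolynomial (Fin 2) R) A₁ A₂ *
        cubicPencil (MvPolynomial.X 1) A₂ A₁).map MvPolynomial.coeToMvPowerSeries.ringHom *ᵥ
      genSeries v =
      MvPolynomial.coeToMvPowerSeries.ringHom ∘
        fun i => (1 - MvPolynomial.X 0 * MvPolynomial.X 1) * MvPolynomial.C (v 0 0 i) := by
  have hcoe : MvPolynomial.coeToMvPowerSeries.ringHom.comp
      (algebraMap R (MvPolynomial (Fin 2) R)) = algebraMap R (MvPowerSeries (Fin 2) R) :=
    RingHom.ext fun r => by simp [MvPowerSeries.algebraMap_apply]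
  rw [Matrix.map_mul, map_cubicPencil _ hcoe, map_cubicPencil _ hcoe, ← mulVec_mulVec]
  simp only [MvPolynomial.coeToMvPowerSeries.ringHom_apply, MvPolynomial.coe_X]
  rw [hv.cubicPencil_X_one_mulVec_genSeries, mulVec_smul,
    hv.cubicPencil_X_zero_mulVec_genSeries_boundaryRow]
  funext i
  simp only [Function.comp_apply, map_mul, map_sub, map_one, Pi.smul_apply, smul_eq_mul,
    MvPolynomial.coeToMvPowerSeries.ringHom_apply, MvPolynomial.coe_X, MvPolynomial.coe_C]

end IsPieriSolution

end QuadrantSeries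

open QuadrantSeries

theorem two_variable_multiplicity_series_rational_general
    (l : ℕ) (A₁ A₂ : Matrix (Fin (l + 1)) (Fin (l + 1)) ℂ)
    (v : ℤ → ℤ → (Fin (l + 1) → ℂ))
    (hneg : ∀ m n : ℤ, m < 0 ∨ n < 0 → v m n = 0)
    (hrec₁ : ∀ m n : ℕ, A₁.mulVec (v m n) =
      v (m + 1) n + v m (n - 1) + v (m - 1) (n + 1))
    (hrec₂ : ∀ m n : ℕ, A₂.mulVec (v m n) =
      v m (n + 1) + v (m - 1) n + v (m + 1) (n - 1))
    (P : Fin (l + 1) → MvPowerSeries (Fin 2) ℂ)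
    (hP : ∀ (i : Fin (l + 1)) (m n : ℕ),
      MvPowerSeries.coeff (Finsupp.single 0 m + Finsupp.single 1 n) (P i) = v m n i) :
    ∀ i : Fin (l + 1), ∃ N D : MvPolynomial (Fin 2) ℂ,
      MvPolynomial.coeff 0 D ≠ 0 ∧
      MvPolynomial.aeval
          (fun k : Fin 2 => (MvPowerSeries.X k : MvPowerSeries (Fin 2) ℂ)) D * P i =
        MvPolynomial.aeval
          (fun k : Fin 2 => (MvPowerSeries.X k : MvPowerSeries (Fin 2) ℂ)) N := by
  intro i
  have hP_eq : P = genSeries v := funext fun j => MvPowerSeries.ext fun s => by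
    rw [coeff_genSeries, ← hP, ← Finsupp.univ_sum_single s, Fin.sum_univ_two]
    simp
  subst hP_eq
  obtain ⟨N, D, hD, hDN⟩ := MvPolynomial.exists_coe_mul_eq_coe_of_map_mulVec_eq
    (by rw [constantCoeff_det_cubicPencil_X_mul]; exact one_ne_zero)
    (IsPieriSolution.map_coe_cubicPencil_mul_mulVec_genSeries ⟨hneg, hrec₁, hrec₂⟩) i
  exact ⟨N, D, hD, by rwa [MvPolynomial.aeval_X_eq_coe, MvPolynomial.aeval_X_eq_coe]⟩

/-- Let `A⁽¹⁾, A⁽²⁾` be commuting `(l+1) × (l+1)` complex matrices and `(v_{m,n})` vectors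
in `ℂ^{l+1}` (zero for negative indices) satisfying the recurrences
`A⁽¹⁾ v_{m,n} = v_{m+1,n} + v_{m,n−1} + v_{m−1,n+1}` and
`A⁽²⁾ v_{m,n} = v_{m,n+1} + v_{m−1,n} + v_{m+1,n−1}`.  Then each coordinate of the vector
of power series `P(t,u) = Σ v_{m,n} tᵐ uⁿ` is rational: there are `N, D ∈ ℂ[t,u]` with
`D(0,0) ≠ 0` and `D·P(t,u)ᵢ = N` in `ℂ⟦t,u⟧`. -/
theorem two_variable_multiplicity_series_rational
    (l : ℕ) (A₁ A₂ : Matrix (Fin (l + 1)) (Fin (l + 1)) ℂ)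
    (hcomm : A₁ * A₂ = A₂ * A₁)
    (v : ℤ → ℤ → (Fin (l + 1) → ℂ))
    (hneg : ∀ m n : ℤ, m < 0 ∨ n < 0 → v m n = 0)
    (hrec₁ : ∀ m n : ℕ, A₁.mulVec (v m n) =
      v (m + 1) n + v m (n - 1) + v (m - 1) (n + 1))
    (hrec₂ : ∀ m n : ℕ, A₂.mulVec (v m n) =
      v m (n + 1) + v (m - 1) n + v (m + 1) (n - 1))
    (P : Fin (l + 1) → MvPowerSeries (Fin 2) ℂ)
    (hP : ∀ (i : Fin (l + 1)) (m n : ℕ),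
      MvPowerSeries.coeff (Finsupp.single 0 m + Finsupp.single 1 n) (P i) = v m n i) :
    ∀ i : Fin (l + 1), ∃ N D : MvPolynomial (Fin 2) ℂ,
      MvPolynomial.coeff 0 D ≠ 0 ∧
      MvPolynomial.aeval
          (fun k : Fin 2 => (MvPowerSeries.X k : MvPowerSeries (Fin 2) ℂ)) D * P i =
        MvPolynomial.aeval
          (fun k : Fin 2 => (MvPowerSeries.X k : MvPowerSeries (Fin 2) ℂ)) N :=
  two_variable_multiplicity_series_rational_general l A₁ A₂ v hneg hrec₁ hrec₂ P hP
end
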